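/- arXiv:2604.12433 — 8 statements merged into one kernel-verified Lean document; each statement's English description precedes it below -/
import Mathlib

section
/- Let M be an n×n matrix over a field, with rows and columns indexed by a finite set V, and let A ⊆ V. Then rank(M + I_A) − corank(M[A]) ≥ 0, where I_A is the diagonal 0/1 matrix with 1's exactly at positions in A, M[A] is the principal submatrix of M on A, and corank(M[A]) = |A| − rank(M[A]). -/
open Matrix

/-- Principal submatrix of `M` on the index set `A`. -/
def psub {V F : Type*} [Fintype V] [DecidableEq V] [Field F]
    (M : Matrix V V F) (A : Finset V) : Matrix A A F :=
  M.submatrix (fun a => a.1) (fun a => a.1)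

/-- Diagonal 0/1 matrix with 1's exactly at positions in `A`. -/
def indDiag {V F : Type*} [Fintype V] [DecidableEq V] [Field F]
    (A : Finset V) : Matrix V V F :=
  Matrix.diagonal (fun v => if v ∈ A then (1 : F) else 0)

/-!
Restricting to `A` turns `M + I_A` into `M[A] + 1`, and passing to a principal submatrix
can only lower the rank. Since `1 = (M[A] + 1) - M[A]` and rank is subadditive,
`|A| = rank 1 ≤ rank (M[A] + 1) + rank M[A] ≤ rank (M + I_A) + rank M[A]`.
-/

namespace Matrix

variable {m n F : Type*} [Fintype n] [Field F]

theorem rank_add_le (X Y : Matrix m n F) : (X + Y).rank ≤ X.rank + Y.rank := by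
  rw [rank, mulVecLin_add]
  exact (Submodule.finrank_mono (LinearMap.range_add_le _ _)).trans
    (Submodule.finrank_add_le_finrank_add_finrank _ _)

theorem rank_neg (X : Matrix m n F) : (-X).rank = X.rank := by
  have hneg : (-X).mulVecLin = -X.mulVecLin := LinearMap.ext fun v => neg_mulVec v X
  rw [rank, rank, hneg, LinearMap.range_neg]

theorem card_le_rank_add_one_add_rank [DecidableEq n] (N : Matrix n n F) :
    Fintype.card n ≤ (N + 1).rank + N.rank :=
  calc Fintype.card n = (1 : Matrix n n F).rank := rank_one.symm
    _ = ((N + 1) + -N).rank := by rw [add_neg_cancel_comm]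
    _ ≤ (N + 1).rank + N.rank := (rank_add_le _ _).trans_eq (by rw [rank_neg])

end Matrix

theorem psub_add_indDiag {V F : Type*} [Fintype V] [DecidableEq V] [Field F]
    (M : Matrix V V F) (A : Finset V) : psub (M + indDiag A) A = psub M A + 1 := by
  ext a b
  simp only [psub, indDiag, Matrix.add_apply, submatrix_apply, diagonal_apply, one_apply,
    Subtype.ext_iff]
  split_ifs with h <;> simp_all

theorem rank_add_indicator_sub_corank_nonneg
    {V F : Type*} [Fintype V] [DecidableEq V] [Field F]
    (M : Matrix V V F) (A : Finset V) :
    (0 : ℤ) ≤ ((M + indDiag A).rank : ℤ) - ((A.card : ℤ) - ((psub M A).rank : ℤ)) := by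
  have hcard : A.card ≤ (psub M A + 1).rank + (psub M A).rank := by
    simpa using card_le_rank_add_one_add_rank (psub M A)
  have hrestrict : (psub M A + 1).rank ≤ (M + indDiag A).rank := by
    rw [← psub_add_indDiag]
    exact rank_submatrix_le _ _ _
  omega
end

section
/- For any n×n matrix M over a field F, there exists a diagonal matrix D = diag(c_1, …, c_n) with each c_i ∈ {0,1} such that M + D is invertible. -/
/-!
Expanding along row `i`, `det (A + diagonal d)` is affine in `d i` with slope the principal
minor at `i`. Fix the last `n` diagonal entries by induction so that the minor at `0` is
nonzero; then the determinant is nonzero for `d 0 = 0` or for `d 0 = 1`, since the two values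
differ by that minor.
-/

namespace Matrix

variable {ι R : Type*} [Fintype ι] [DecidableEq ι] [CommRing R]

theorem det_add_diagonal_update (A : Matrix ι ι R) (d : ι → R) (i : ι) (t : R) :
    det (A + diagonal (Function.update d i t)) =
      det (A + diagonal (Function.update d i 0)) +
        t * adjugate (A + diagonal (Function.update d i 0)) i i := by
  set B := A + diagonal (Function.update d i 0)
  have hrow : A + diagonal (Function.update d i t) = B.updateRow i (B i + t • Pi.single i 1) := by
    ext j k
    rcases eq_or_ne j i with rfl | hj
    · rcases eq_or_ne k j with rfl | hk
      · simp [B]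
      · simp [B, hk.symm]
    · simp [B, updateRow_ne hj, diagonal_apply, Function.update_of_ne hj]
  rw [hrow, det_updateRow_add, updateRow_eq_self, det_updateRow_smul, adjugate_apply]

theorem det_add_diagonal_cons {n : ℕ} (A : Matrix (Fin (n + 1)) (Fin (n + 1)) R) (t : R)
    (c : Fin n → R) :
    det (A + diagonal (Fin.cons t c)) =
      det (A + diagonal (Fin.cons 0 c)) + t * det (A.submatrix Fin.succ Fin.succ + diagonal c) := by
  have hminor : (A + diagonal (Fin.cons 0 c)).submatrix Fin.succ Fin.succ =
      A.submatrix Fin.succ Fin.succ + diagonal c := by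
    ext j k
    simp [diagonal_apply]
  have h := det_add_diagonal_update A (Fin.cons 0 c) 0 t
  rwa [Fin.update_cons_zero, Fin.update_cons_zero, adjugate_fin_succ_eq_det_submatrix,
    Fin.succAbove_zero, hminor, Fin.val_zero, pow_zero, one_mul] at h

theorem exists_zero_one_det_add_diagonal_ne_zero [Nontrivial R] {n : ℕ}
    (M : Matrix (Fin n) (Fin n) R) :
    ∃ c : Fin n → R, (∀ i, c i = 0 ∨ c i = 1) ∧ det (M + diagonal c) ≠ 0 := by
  induction n with
  | zero => exact ⟨0, finZeroElim, by simp⟩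
  | succ n ih =>
    obtain ⟨c, hc01, hc⟩ := ih (M.submatrix Fin.succ Fin.succ)
    obtain ⟨t, ht01, ht⟩ :
        ∃ t : R, (t = 0 ∨ t = 1) ∧ det (M + diagonal (Fin.cons t c)) ≠ 0 := by
      by_cases h0 : det (M + diagonal (Fin.cons 0 c)) = 0
      · refine ⟨1, Or.inr rfl, ?_⟩
        rwa [det_add_diagonal_cons, h0, zero_add, one_mul]
      · exact ⟨0, Or.inl rfl, h0⟩
    exact ⟨Fin.cons t c, Fin.cases ht01 hc01, ht⟩

end Matrix

open Matrix

theorem exists_zero_one_diagonal_perturbation_isUnit_general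
    {F : Type*} [Field F] (n : ℕ) (M : Matrix (Fin n) (Fin n) F) :
    ∃ c : Fin n → F, (∀ i, c i = 0 ∨ c i = 1) ∧ IsUnit (M + Matrix.diagonal c) := by
  obtain ⟨c, hc01, hc⟩ := exists_zero_one_det_add_diagonal_ne_zero M
  exact ⟨c, hc01, (isUnit_iff_isUnit_det _).2 hc.isUnit⟩

theorem exists_zero_one_diagonal_perturbation_isUnit
    {F : Type*} [Field F] [DecidableEq F] (n : ℕ) (M : Matrix (Fin n) (Fin n) F) :
    ∃ c : Fin n → F, (∀ i, c i = 0 ∨ c i = 1) ∧ IsUnit (M + Matrix.diagonal c) :=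
  exists_zero_one_diagonal_perturbation_isUnit_general n M
end

section
/- Let M be a square matrix over a field indexed by a finite set V, written in block form M = [[P, Q],[R, S]] with P = M[X] for X ⊆ V nonsingular. Define the pivot M*X = [[P⁻¹, −P⁻¹Q],[RP⁻¹, S − RP⁻¹Q]]. Then for all A ⊆ V, corank(M[A]) = corank((M*X)[A Δ X]), where Δ denotes symmetric difference. -/
open Matrix

/-- The pivot `M * X` of a square matrix `M` on a subset `X` of its index set,
given by the block formula `[[P⁻¹, -P⁻¹Q],[RP⁻¹, S - RP⁻¹Q]]` with respect to
the partition `(X, V \ X)`, where `P = M[X]`. -/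
noncomputable def pivot {V F : Type*} [Fintype V] [DecidableEq V] [Field F]
    (M : Matrix V V F) (X : Finset V) : Matrix V V F :=
  let P : Matrix {x : V // x ∈ X} {x : V // x ∈ X} F :=
    M.submatrix (fun a => a.1) (fun a => a.1)
  let Q : Matrix {x : V // x ∈ X} {x : V // x ∉ X} F :=
    M.submatrix (fun a => a.1) (fun b => b.1)
  let R : Matrix {x : V // x ∉ X} {x : V // x ∈ X} F :=
    M.submatrix (fun b => b.1) (fun a => a.1)
  let S : Matrix {x : V // x ∉ X} {x : V // x ∉ X} F :=
    M.submatrix (fun b => b.1) (fun b => b.1)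
  Matrix.reindex (Equiv.sumCompl (· ∈ X)) (Equiv.sumCompl (· ∈ X))
    (Matrix.fromBlocks P⁻¹ (-(P⁻¹ * Q)) (R * P⁻¹) (S - R * P⁻¹ * Q))

/-! Let `E_A x` agree with `M x` on `A` and with `x` off `A`. The solutions of `E_A x = 0` are
the kernel vectors of `M[A]` extended by zero, so `corank M[A] = dim ker E_A`. The block formula
says exactly that `M * X` sends `E_X x` to the vector agreeing with `x` on `X` and with `M x` off
`X`: pivoting swaps the `X`-coordinates of `x` and `M x`. Hence `E^{M * X}_{A ∆ X} ∘ E_X = E_A`,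
and `E_X` is invertible because `M[X]` is, so the two kernels have the same dimension. -/

theorem Finset.piecewise_comp_sumCompl {α β : Type*} [DecidableEq α] (s : Finset α)
    (f g : α → β) :
    s.piecewise f g ∘ Equiv.sumCompl (· ∈ s) =
      Sum.elim (fun a : {x // x ∈ s} => f a) (fun b : {x // x ∉ s} => g b) := by
  ext (a | b)
  · simp [a.2]
  · simp [b.2]

namespace Matrix

theorem fromBlocks_pivot_mulVec {m n F : Type*} [Fintype m] [Fintype n] [DecidableEq m] [Field F]
    {P : Matrix m m F} (hP : IsUnit P) (Q : Matrix m n F) (R : Matrix n m F) (S : Matrix n n F)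
    (x₁ : m → F) (x₂ : n → F) :
    fromBlocks P⁻¹ (-(P⁻¹ * Q)) (R * P⁻¹) (S - R * P⁻¹ * Q) *ᵥ Sum.elim (P *ᵥ x₁ + Q *ᵥ x₂) x₂ =
      Sum.elim x₁ (R *ᵥ x₁ + S *ᵥ x₂) := by
  have hPP : P⁻¹ * P = 1 := P.nonsing_inv_mul ((isUnit_iff_isUnit_det P).mp hP)
  simp only [fromBlocks_mulVec, Sum.elim_comp_inl, Sum.elim_comp_inr, mulVec_add, mulVec_mulVec,
    hPP, Matrix.mul_assoc, Matrix.mul_one, one_mulVec, neg_mulVec, sub_mulVec]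
  congr 1 <;> abel

theorem submatrix_sumCompl {α β : Type*} (p : α → Prop) [DecidablePred p] (M : Matrix α α β) :
    M.submatrix (Equiv.sumCompl p) (Equiv.sumCompl p) =
      fromBlocks (M.submatrix (fun a : {x // p x} => a.1) (fun a => a.1))
        (M.submatrix (fun a : {x // p x} => a.1) (fun b : {x // ¬ p x} => b.1))
        (M.submatrix (fun b : {x // ¬ p x} => b.1) (fun a : {x // p x} => a.1))
        (M.submatrix (fun b : {x // ¬ p x} => b.1) (fun b => b.1)) := by
  ext (i | i) (j | j) <;> rfl

theorem mulVec_comp_sumCompl {α β : Type*} [Fintype α] [DecidableEq α]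
    [NonUnitalNonAssocSemiring β] (s : Finset α) (M : Matrix α α β) (x : α → β) :
    (M *ᵥ x) ∘ Equiv.sumCompl (· ∈ s) =
      Sum.elim
        (M.submatrix (fun a : {i // i ∈ s} => a.1) (fun a => a.1) *ᵥ (fun a : {i // i ∈ s} => x a) +
          M.submatrix (fun a : {i // i ∈ s} => a.1) (fun b : {i // i ∉ s} => b.1) *ᵥ
            (fun b : {i // i ∉ s} => x b))
        (M.submatrix (fun b : {i // i ∉ s} => b.1) (fun a : {i // i ∈ s} => a.1) *ᵥ
            (fun a : {i // i ∈ s} => x a) +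
          M.submatrix (fun b : {i // i ∉ s} => b.1) (fun b => b.1) *ᵥ
            (fun b : {i // i ∉ s} => x b)) := by
  set e := Equiv.sumCompl (· ∈ s)
  calc (M *ᵥ x) ∘ e = M.submatrix e e *ᵥ (x ∘ e) := by
        rw [submatrix_mulVec_equiv, Function.comp_assoc, e.self_comp_symm, Function.comp_id]
    _ = _ := by rw [M.submatrix_sumCompl (· ∈ s), fromBlocks_mulVec]; rfl

end Matrix

section Exchange

variable {V F : Type*} [Fintype V] [DecidableEq V] [Field F]

noncomputable def exchange (M : Matrix V V F) (A : Finset V) : (V → F) →ₗ[F] V → F where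
  toFun x := A.piecewise (M *ᵥ x) x
  map_add' x y := by
    ext i
    by_cases hi : i ∈ A <;> simp [hi, mulVec_add]
  map_smul' c x := by
    ext i
    by_cases hi : i ∈ A <;> simp [hi, mulVec_smul]

theorem exchange_apply (M : Matrix V V F) (A : Finset V) (x : V → F) :
    exchange M A x = A.piecewise (M *ᵥ x) x := rfl

theorem pivot_mulVec_exchange {M : Matrix V V F} {X : Finset V} (hX : IsUnit (psub M X))
    (x : V → F) : pivot M X *ᵥ exchange M X x = X.piecewise x (M *ᵥ x) := by
  set e := Equiv.sumCompl (· ∈ X)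
  have hMx := M.mulVec_comp_sumCompl X x
  have h₁ : (fun a : {i // i ∈ X} => (M *ᵥ x) a) = _ := congrArg (· ∘ Sum.inl) hMx
  have h₂ : (fun b : {i // i ∉ X} => (M *ᵥ x) b) = _ := congrArg (· ∘ Sum.inr) hMx
  refine e.surjective.injective_comp_right ?_
  dsimp only at h₁ h₂ ⊢
  rw [pivot, reindex_apply, submatrix_mulVec_equiv, Equiv.symm_symm, Function.comp_assoc,
    e.symm_comp_self, Function.comp_id, exchange_apply, Finset.piecewise_comp_sumCompl,
    Finset.piecewise_comp_sumCompl, h₁, h₂, Sum.elim_comp_inl, Sum.elim_comp_inr]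
  exact fromBlocks_pivot_mulVec hX _ _ _ _ _

theorem exchange_pivot_comp_exchange {M : Matrix V V F} {X : Finset V} (hX : IsUnit (psub M X))
    (A : Finset V) : exchange (pivot M X) (symmDiff A X) ∘ₗ exchange M X = exchange M A := by
  refine LinearMap.ext fun x => funext fun i => ?_
  rw [LinearMap.comp_apply, exchange_apply (pivot M X), pivot_mulVec_exchange hX, exchange_apply,
    exchange_apply]
  by_cases hA : i ∈ A <;> by_cases hXi : i ∈ X <;> simp [hA, hXi, Finset.mem_symmDiff]

theorem mem_ker_exchange {M : Matrix V V F} {A : Finset V} {x : V → F} :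
    x ∈ LinearMap.ker (exchange M A) ↔ (∀ i ∈ A, (M *ᵥ x) i = 0) ∧ ∀ i ∉ A, x i = 0 := by
  simp only [LinearMap.mem_ker, exchange_apply, funext_iff, Pi.zero_apply, Finset.piecewise]
  refine ⟨fun h => ⟨fun i hi => by simpa [hi] using h i, fun i hi => by simpa [hi] using h i⟩,
    fun h i => ?_⟩
  split_ifs with hi
  exacts [h.1 i hi, h.2 i hi]

theorem psub_mulVec_restrict (M : Matrix V V F) {A : Finset V} {x : V → F}
    (hx : ∀ i ∉ A, x i = 0) : psub M A *ᵥ (fun a : A => x a) = fun a : A => (M *ᵥ x) a := by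
  ext a
  simp only [mulVec, dotProduct, psub, submatrix_apply]
  rw [Finset.sum_coe_sort A (fun j => M a j * x j)]
  exact Finset.sum_subset (Finset.subset_univ A) fun j _ hj => by rw [hx j hj, mul_zero]

noncomputable def kerExchangeEquiv (M : Matrix V V F) (A : Finset V) :
    LinearMap.ker (exchange M A) ≃ₗ[F] LinearMap.ker (psub M A).mulVecLin where
  toFun x := ⟨fun a => x.1 a, by
    obtain ⟨hMx, hx⟩ := mem_ker_exchange.1 x.2
    rw [LinearMap.mem_ker, mulVecLin_apply, psub_mulVec_restrict M hx]
    exact funext fun a => hMx a a.2⟩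
  map_add' _ _ := rfl
  map_smul' _ _ := rfl
  invFun y := ⟨fun i => if h : i ∈ A then y.1 ⟨i, h⟩ else 0, by
    have hy : ∀ i ∉ A, (fun i => if h : i ∈ A then y.1 ⟨i, h⟩ else 0) i = 0 :=
      fun i hi => dif_neg hi
    refine mem_ker_exchange.2 ⟨fun i hi => ?_, hy⟩
    have h := congrFun (psub_mulVec_restrict M hy) ⟨i, hi⟩
    simp only [dif_pos (Subtype.prop _)] at h
    rw [← h]
    exact congrFun (LinearMap.mem_ker.1 y.2) _⟩
  left_inv x := Subtype.ext <| funext fun i => by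
    by_cases hi : i ∈ A
    · exact dif_pos hi
    · exact (dif_neg hi).trans ((mem_ker_exchange.1 x.2).2 i hi).symm
  right_inv y := Subtype.ext <| funext fun a => dif_pos a.2

theorem rank_psub_add_finrank_ker_exchange (M : Matrix V V F) (A : Finset V) :
    (psub M A).rank + Module.finrank F (LinearMap.ker (exchange M A)) = A.card := by
  rw [(kerExchangeEquiv M A).finrank_eq, Matrix.rank, LinearMap.finrank_range_add_finrank_ker,
    Module.finrank_fintype_fun_eq_card, Fintype.card_coe]

theorem exchange_bijective {M : Matrix V V F} {X : Finset V} (hX : IsUnit (psub M X)) :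
    Function.Bijective (exchange M X) := by
  have h := rank_psub_add_finrank_ker_exchange M X
  rw [rank_of_isUnit _ hX, Fintype.card_coe, Nat.add_eq_left, Submodule.finrank_eq_zero,
    LinearMap.ker_eq_bot] at h
  exact ⟨h, LinearMap.injective_iff_surjective.mp h⟩

end Exchange

theorem corank_pivot_symmDiff
    {V F : Type*} [Fintype V] [DecidableEq V] [Field F]
    (M : Matrix V V F) (X : Finset V)
    (hX : IsUnit (M.submatrix (fun a : {x : V // x ∈ X} => a.1)
      (fun a : {x : V // x ∈ X} => a.1)))
    (A : Finset V) :
    (A.card : ℤ) - ((psub M A).rank : ℤ) =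
      ((symmDiff A X).card : ℤ) - ((psub (pivot M X) (symmDiff A X)).rank : ℤ) := by
  let e := LinearEquiv.ofBijective (exchange M X) (exchange_bijective hX)
  have hcomp : exchange (pivot M X) (symmDiff A X) ∘ₗ (e : (V → F) →ₗ[F] V → F) = exchange M A :=
    exchange_pivot_comp_exchange hX A
  have hker : Module.finrank F (LinearMap.ker (exchange M A)) =
      Module.finrank F (LinearMap.ker (exchange (pivot M X) (symmDiff A X))) := by
    rw [← hcomp, LinearMap.ker_comp, Submodule.comap_equiv_eq_map_symm,
      LinearEquiv.finrank_map_eq]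
  have hA := rank_psub_add_finrank_ker_exchange M A
  have hAX := rank_psub_add_finrank_ker_exchange (pivot M X) (symmDiff A X)
  omega
end

section
/- Let M be an invertible square matrix over a field indexed by a finite set V. Define the partial-⟨δ⟩ polynomial P_δ(M,z) = Σ_{A ⊆ V} z^{rank(M[A]) + rank(M[A^c])}. Then P_δ(M, z) = P_δ(M⁻¹, z). -/
/-!
A vector `x` supported on `A` with `M x` vanishing on `A` is a kernel vector of `M[A]`. Multiplying
by `M` sends these bijectively onto the vectors `y` supported on `Aᶜ` with `M⁻¹ y = x` vanishing on
`Aᶜ`, i.e. onto the kernel of `M⁻¹[Aᶜ]`. So `corank M[A] = corank M⁻¹[Aᶜ]`, and by rank–nullity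
the exponents of the summands for `A` on both sides agree.
-/

open Matrix Polynomial

section ExtendByZero

variable {V R : Type*} [Zero R] {A : Finset V}

lemma extend_val_apply_of_notMem (x : A → R) {v : V} (hv : v ∉ A) :
    Function.extend Subtype.val x 0 v = 0 :=
  Function.extend_apply' _ _ _ fun ⟨a, ha⟩ => hv (ha ▸ a.2)

lemma extend_val_restrict {y : V → R} (hy : ∀ v ∉ A, y v = 0) :
    Function.extend (Subtype.val : A → V) (fun a => y a) 0 = y := by
  ext v
  by_cases hv : v ∈ A
  · exact Subtype.val_injective.extend_apply _ _ ⟨v, hv⟩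
  · rw [extend_val_apply_of_notMem _ hv, hy v hv]

end ExtendByZero

section PrincipalKernel

variable {V F : Type*} [Fintype V] [DecidableEq V] [Field F]

lemma psub_mulVec_apply (M : Matrix V V F) (A : Finset V) (x : A → F) (a : A) :
    (psub M A *ᵥ x) a = (M *ᵥ Function.extend Subtype.val x 0) a := by
  simp only [mulVec, dotProduct, psub, submatrix_apply]
  rw [← Finset.sum_subset A.subset_univ
      (fun v _ hv => by rw [extend_val_apply_of_notMem x hv, mul_zero]),
    ← Finset.sum_coe_sort A]
  exact Finset.sum_congr rfl fun b _ => by rw [Subtype.val_injective.extend_apply]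

/-- The kernel of `psub M A`, realised inside `V → F` by extending vectors by zero. -/
def psubKer (M : Matrix V V F) (A : Finset V) : Submodule F (V → F) where
  carrier := {x | (∀ v ∉ A, x v = 0) ∧ ∀ v ∈ A, (M *ᵥ x) v = 0}
  add_mem' {x y} hx hy := by
    refine ⟨fun v hv => ?_, fun v hv => ?_⟩ <;>
      simp [mulVec_add, hx.1 v, hy.1 v, hx.2 v, hy.2 v, hv]
  zero_mem' := by simp
  smul_mem' c x hx := by
    refine ⟨fun v hv => ?_, fun v hv => ?_⟩ <;> simp [mulVec_smul, hx.1 v, hx.2 v, hv]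

omit [DecidableEq V] in
lemma mem_psubKer {M : Matrix V V F} {A : Finset V} {x : V → F} :
    x ∈ psubKer M A ↔ (∀ v ∉ A, x v = 0) ∧ ∀ v ∈ A, (M *ᵥ x) v = 0 := Iff.rfl

lemma psubKer_eq_map_ker (M : Matrix V V F) (A : Finset V) :
    psubKer M A = (LinearMap.ker (psub M A).mulVecLin).map
      (Function.ExtendByZero.linearMap F (Subtype.val : A → V)) := by
  ext y
  simp only [Submodule.mem_map, LinearMap.mem_ker, mulVecLin_apply, mem_psubKer]
  constructor
  · rintro ⟨hsupp, hker⟩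
    refine ⟨fun a => y a, ?_, extend_val_restrict hsupp⟩
    ext a
    rw [psub_mulVec_apply, extend_val_restrict hsupp]
    exact hker a a.2
  · rintro ⟨x, hx, rfl⟩
    refine ⟨fun v hv => extend_val_apply_of_notMem x hv, fun v hv => ?_⟩
    have hxv := congr_fun hx ⟨v, hv⟩
    rwa [psub_mulVec_apply] at hxv

lemma finrank_psubKer (M : Matrix V V F) (A : Finset V) :
    Module.finrank F (psubKer M A) = Module.finrank F (LinearMap.ker (psub M A).mulVecLin) := by
  rw [psubKer_eq_map_ker]
  exact (Submodule.equivMapOfInjective _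
    (Function.extend_injective Subtype.val_injective (0 : V → F)) _).finrank_eq.symm

lemma rank_psub_add_finrank_psubKer (M : Matrix V V F) (A : Finset V) :
    (psub M A).rank + Module.finrank F (psubKer M A) = A.card := by
  rw [finrank_psubKer, Matrix.rank, LinearMap.finrank_range_add_finrank_ker]
  simp

lemma psubKer_map_mulVecLin {M : Matrix V V F} (hM : IsUnit M) (A : Finset V) :
    (psubKer M A).map M.mulVecLin = psubKer M⁻¹ (Finset.univ \ A) := by
  have hdet : IsUnit M.det := (isUnit_iff_isUnit_det M).1 hM
  ext y
  simp only [Submodule.mem_map, mulVecLin_apply, mem_psubKer, Finset.mem_sdiff, Finset.mem_univ,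
    true_and, not_not]
  constructor
  · rintro ⟨x, ⟨hsupp, hker⟩, rfl⟩
    rw [mulVec_mulVec, nonsing_inv_mul M hdet, one_mulVec]
    exact ⟨hker, hsupp⟩
  · rintro ⟨hsupp, hker⟩
    refine ⟨M⁻¹ *ᵥ y, ⟨hker, ?_⟩, ?_⟩ <;>
      rw [mulVec_mulVec, mul_nonsing_inv M hdet, one_mulVec]
    exact hsupp

lemma finrank_psubKer_inv_compl {M : Matrix V V F} (hM : IsUnit M) (A : Finset V) :
    Module.finrank F (psubKer M⁻¹ (Finset.univ \ A)) = Module.finrank F (psubKer M A) := by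
  rw [← psubKer_map_mulVecLin hM]
  exact (Submodule.equivMapOfInjective _ (mulVec_injective_iff_isUnit.2 hM) _).finrank_eq.symm

end PrincipalKernel

theorem partialDelta_inv_invariance
    {V F : Type*} [Fintype V] [DecidableEq V] [Field F]
    (M : Matrix V V F) (hM : IsUnit M) :
    (∑ A : Finset V, (X : Polynomial ℤ) ^
        ((psub M A).rank + (psub M (Finset.univ \ A)).rank)) =
      ∑ A : Finset V, (X : Polynomial ℤ) ^
        ((psub M⁻¹ A).rank + (psub M⁻¹ (Finset.univ \ A)).rank) := by
  refine Finset.sum_congr rfl fun A _ => congrArg (X ^ ·) ?_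
  have hA := finrank_psubKer_inv_compl hM A
  have hAc := finrank_psubKer_inv_compl hM (Finset.univ \ A)
  rw [Finset.sdiff_sdiff_self_left, Finset.univ_inter] at hAc
  have hMA := rank_psub_add_finrank_psubKer M A
  have hMAc := rank_psub_add_finrank_psubKer M (Finset.univ \ A)
  have hMinvA := rank_psub_add_finrank_psubKer M⁻¹ A
  have hMinvAc := rank_psub_add_finrank_psubKer M⁻¹ (Finset.univ \ A)
  omega
end

section
/- Let M be a square matrix over a field indexed by V = V₁ ⊔ V₂ (disjoint union) that is block-diagonal with respect to this partition, i.e., M[u,v] = 0 whenever u,v lie in different parts. Then the partial-⟨δ⟩ polynomial satisfies P_δ(M,z) = P_δ(M[V₁],z) · P_δ(M[V₂],z), where P_δ(N,z) = Σ_{A ⊆ index set} z^{rank(N[A]) + rank(N[A^c])}. -/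
open Matrix Polynomial

/-- The partial-⟨δ⟩ polynomial of a square matrix. -/
noncomputable def partialDelta {V F : Type*} [Fintype V] [DecidableEq V] [Field F]
    (M : Matrix V V F) : Polynomial ℤ :=
  ∑ A : Finset V, (X : Polynomial ℤ) ^ ((psub M A).rank + (psub M (Finset.univ \ A)).rank)

/-! For a block-diagonal `M`, every principal submatrix `M[A]` is, after reindexing, block
diagonal with blocks `M[V₁][A ∩ V₁]` and `M[V₂][A ∩ V₂]`, so its rank splits as a sum; the same
holds for the complement of `A`. Hence each monomial of `P_δ(M)` factors, and since subsets of
`V₁ ⊔ V₂` are exactly pairs of subsets of `V₁` and `V₂`, the sum factors as well. -/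

theorem Submodule.finrank_prod {F M M' : Type*} [Field F] [AddCommGroup M] [AddCommGroup M']
    [Module F M] [Module F M'] (p : Submodule F M) (q : Submodule F M')
    [FiniteDimensional F p] [FiniteDimensional F q] :
    Module.finrank F (p.prod q) = Module.finrank F p + Module.finrank F q := by
  have hinj : Function.Injective (p.subtype.prodMap q.subtype) :=
    Prod.map_injective.2 ⟨p.injective_subtype, q.injective_subtype⟩
  rw [← Module.finrank_prod, ← LinearMap.finrank_range_of_inj hinj, LinearMap.range_prodMap,
    Submodule.range_subtype, Submodule.range_subtype]

theorem Matrix.mulVecLin_fromBlocks_zero_zero {m n m' n' R : Type*} [Fintype n] [Fintype n']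
    [CommSemiring R] (A : Matrix m n R) (D : Matrix m' n' R) :
    (fromBlocks A 0 0 D).mulVecLin =
      (LinearEquiv.sumArrowLequivProdArrow m m' R R).symm.toLinearMap ∘ₗ
        A.mulVecLin.prodMap D.mulVecLin ∘ₗ
          (LinearEquiv.sumArrowLequivProdArrow n n' R R).toLinearMap := by
  ext x i
  cases i <;> simp [fromBlocks_mulVec] <;> rfl

theorem Matrix.rank_fromBlocks_zero_zero {m n m' n' F : Type*} [Fintype n] [Fintype n'] [Field F]
    (A : Matrix m n F) (D : Matrix m' n' F) :
    (fromBlocks A 0 0 D).rank = A.rank + D.rank := by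
  rw [Matrix.rank, mulVecLin_fromBlocks_zero_zero, LinearMap.range_comp,
    LinearMap.range_comp_of_range_eq_top _ (LinearEquiv.range _), LinearEquiv.finrank_map_eq,
    LinearMap.range_prodMap, Submodule.finrank_prod]
  rfl

def Finset.subtypeSumEquiv {α β : Type*} (s : Finset (α ⊕ β)) : s.toLeft ⊕ s.toRight ≃ s :=
  (Equiv.sumCongr (Equiv.subtypeEquivRight fun _ => Finset.mem_toLeft)
    (Equiv.subtypeEquivRight fun _ => Finset.mem_toRight)).trans Equiv.subtypeSum.symm

section BlockDiagonal

variable {V₁ V₂ F : Type*} [Fintype V₁] [DecidableEq V₁] [Fintype V₂] [DecidableEq V₂] [Field F]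
  {M : Matrix (V₁ ⊕ V₂) (V₁ ⊕ V₂) F}

theorem psub_submatrix_subtypeSumEquiv
    (h₁₂ : ∀ (u : V₁) (v : V₂), M (Sum.inl u) (Sum.inr v) = 0)
    (h₂₁ : ∀ (u : V₂) (v : V₁), M (Sum.inr u) (Sum.inl v) = 0) (A : Finset (V₁ ⊕ V₂)) :
    (psub M A).submatrix A.subtypeSumEquiv A.subtypeSumEquiv =
      fromBlocks (psub (M.submatrix Sum.inl Sum.inl) A.toLeft) 0 0
        (psub (M.submatrix Sum.inr Sum.inr) A.toRight) := by
  ext (a | a) (b | b)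
  · rfl
  · exact h₁₂ a b
  · exact h₂₁ a b
  · rfl

theorem rank_psub_of_blockDiagonal
    (h₁₂ : ∀ (u : V₁) (v : V₂), M (Sum.inl u) (Sum.inr v) = 0)
    (h₂₁ : ∀ (u : V₂) (v : V₁), M (Sum.inr u) (Sum.inl v) = 0) (A : Finset (V₁ ⊕ V₂)) :
    (psub M A).rank = (psub (M.submatrix Sum.inl Sum.inl) A.toLeft).rank
      + (psub (M.submatrix Sum.inr Sum.inr) A.toRight).rank := by
  rw [← rank_submatrix (psub M A) A.subtypeSumEquiv A.subtypeSumEquiv,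
    psub_submatrix_subtypeSumEquiv h₁₂ h₂₁, rank_fromBlocks_zero_zero]

end BlockDiagonal

theorem Finset.sum_toLeft_mul_toRight {α β R : Type*} [Fintype α] [Fintype β] [CommSemiring R]
    (f : Finset α → R) (g : Finset β → R) :
    ∑ s : Finset (α ⊕ β), f s.toLeft * g s.toRight = (∑ s, f s) * ∑ t, g t := by
  rw [Fintype.sum_mul_sum, ← Fintype.sum_prod_type']
  exact Fintype.sum_equiv Finset.sumEquiv.toEquiv _ _ fun _ => rfl

theorem partialDelta_blockDiagonal
    {V₁ V₂ F : Type*} [Fintype V₁] [DecidableEq V₁] [Fintype V₂] [DecidableEq V₂] [Field F]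
    (M : Matrix (V₁ ⊕ V₂) (V₁ ⊕ V₂) F)
    (h₁₂ : ∀ (u : V₁) (v : V₂), M (Sum.inl u) (Sum.inr v) = 0)
    (h₂₁ : ∀ (u : V₂) (v : V₁), M (Sum.inr u) (Sum.inl v) = 0) :
    partialDelta M =
      partialDelta (M.submatrix Sum.inl Sum.inl) * partialDelta (M.submatrix Sum.inr Sum.inr) := by
  rw [partialDelta, partialDelta, partialDelta, ← Finset.sum_toLeft_mul_toRight]
  refine Finset.sum_congr rfl fun A _ => ?_
  rw [rank_psub_of_blockDiagonal h₁₂ h₂₁, rank_psub_of_blockDiagonal h₁₂ h₂₁,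
    Finset.toLeft_sdiff, Finset.toRight_sdiff, Finset.toLeft_univ, Finset.toRight_univ, ← pow_add,
    add_add_add_comm]
end

section
/- Let M be a square matrix over a field with finite index set V. Then the partial-⟨τ⟩ polynomial P_τ(M,z) = Σ_{A⊆V} z^{rank(M+I_A)} has degree exactly |V|; that is, max over A ⊆ V of rank(M + I_A) equals |V|, and every exponent is at most |V|. -/
/-!
The determinant is affine in each diagonal entry: by row-linearity,
`det (N + E_ii) = det N + adj(N)_ii`, and `adj(N)_ii` is the principal minor of `N` with row and
column `i` removed. Inductively choose a 0/1 shift of the trailing diagonal making that minor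
nonzero; then of the two choices `0` and `1` for the leading entry at least one gives a nonzero
determinant. A nonsingular `M + I_A` has full rank, and no rank exceeds the number of columns.
-/

open Matrix Polynomial

namespace Matrix

variable {n R : Type*} [CommRing R]

theorem det_add_diagonal_single_one [Fintype n] [DecidableEq n] (A : Matrix n n R) (i : n) :
    (A + diagonal (Pi.single i 1)).det = A.det + adjugate A i i := by
  have hrow : A + diagonal (Pi.single i 1) = A.updateRow i (A i + Pi.single i 1) := by
    ext j k
    by_cases hj : j = i
    · subst hj; simp [diagonal_apply, Pi.single_apply, eq_comm]
    · simp [hj, diagonal_apply]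
  rw [hrow, det_updateRow_add, updateRow_eq_self, adjugate_apply]

theorem adjugate_add_diagonal_cons_zero_zero {m : ℕ} (M : Matrix (Fin (m + 1)) (Fin (m + 1)) R)
    (d : Fin m → R) :
    adjugate (M + diagonal (Fin.cons 0 d)) 0 0 =
      (M.submatrix Fin.succ Fin.succ + diagonal d).det := by
  have hdiag : (diagonal (Fin.cons 0 d)).submatrix Fin.succ Fin.succ = diagonal d := by
    rw [submatrix_diagonal _ _ (Fin.succ_injective _), Fin.cons_comp_succ]
  rw [adjugate_fin_succ_eq_det_submatrix, Fin.succAbove_zero, ← hdiag, Fin.val_zero, add_zero,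
    pow_zero, one_mul]
  rfl

theorem exists_det_add_diagonal_ne_zero [Nontrivial R] :
    ∀ {m : ℕ} (M : Matrix (Fin m) (Fin m) R),
      ∃ d : Fin m → R, (∀ i, d i = 0 ∨ d i = 1) ∧ (M + diagonal d).det ≠ 0
  | 0, M => ⟨0, fun _ => .inl rfl, by simp⟩
  | m + 1, M => by
    obtain ⟨d, hd, hdet⟩ := exists_det_add_diagonal_ne_zero (M.submatrix Fin.succ Fin.succ)
    have hcons (a : R) (ha : a = 0 ∨ a = 1) (i : Fin (m + 1)) :
        (Fin.cons a d : Fin (m + 1) → R) i = 0 ∨ (Fin.cons a d : Fin (m + 1) → R) i = 1 :=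
      Fin.cases ha hd i
    by_cases h0 : (M + diagonal (Fin.cons 0 d)).det = 0
    · refine ⟨Fin.cons 1 d, hcons 1 (.inr rfl), ?_⟩
      have hsplit : diagonal (Fin.cons 1 d : Fin (m + 1) → R) =
          diagonal (Fin.cons 0 d) + diagonal (Pi.single 0 1) := by
        rw [diagonal_add]
        congr 1
        ext i
        refine Fin.cases ?_ (fun j => ?_) i <;> simp
      rw [hsplit, ← add_assoc, det_add_diagonal_single_one, h0, zero_add,
        adjugate_add_diagonal_cons_zero_zero]
      exact hdet
    · exact ⟨Fin.cons 0 d, hcons 0 (.inl rfl), h0⟩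

end Matrix

theorem exists_det_add_indDiag_ne_zero {V F : Type*} [Fintype V] [DecidableEq V] [Field F]
    (M : Matrix V V F) : ∃ A : Finset V, (M + indDiag A).det ≠ 0 := by
  classical
  let e := Fintype.equivFin V
  obtain ⟨d, hd, hdet⟩ := Matrix.exists_det_add_diagonal_ne_zero (M.submatrix e.symm e.symm)
  refine ⟨({v | d (e v) = 1} : Finset V), ?_⟩
  have hind : indDiag ({v | d (e v) = 1} : Finset V) = diagonal (d ∘ e) := by
    unfold indDiag
    congr 1
    ext v
    rcases hd (e v) with h | h <;> simp [h]
  have hreindex : M + indDiag ({v | d (e v) = 1} : Finset V) =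
      (M.submatrix e.symm e.symm + diagonal d).submatrix e e := by
    rw [hind, ← submatrix_diagonal_equiv]
    ext i j
    simp only [Matrix.add_apply, submatrix_apply, Equiv.symm_apply_apply]
  rwa [hreindex, det_submatrix_equiv_self]

theorem partialTau_degree_eq_card
    {V F : Type*} [Fintype V] [DecidableEq V] [Field F]
    (M : Matrix V V F) :
    (∃ A : Finset V, (M + indDiag A).rank = Fintype.card V) ∧
      ∀ A : Finset V, (M + indDiag A).rank ≤ Fintype.card V := by
  obtain ⟨A, hA⟩ := exists_det_add_indDiag_ne_zero M
  refine ⟨⟨A, rank_of_isUnit _ ?_⟩, fun A => rank_le_card_width _⟩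
  rwa [isUnit_iff_isUnit_det, isUnit_iff_ne_zero]
end

section
/- Let M be a square matrix over a field with finite index set V. Then the set of values {rank(M + I_A) : A ⊆ V} is an interval of integers: if m = min and M* = max of this set, then every integer between m and M* is attained by some A ⊆ V. -/
open Matrix Polynomial

/-!
Toggling one element `a` of `A` changes `M + I_A` by a matrix supported on row `a`, hence of
rank at most one, so `A ↦ rank (M + I_A)` moves by at most one along each edge of the hypercube
of subsets. Walking from a subset of low rank to one of high rank, one element of their symmetric
difference at a time, the rank therefore passes through every intermediate value.
-/

open scoped symmDiff

theorem Finset.intermediate_value_of_symmDiff_singleton_le {α : Type*} [DecidableEq α]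
    (f : Finset α → ℕ) (hf : ∀ s a, f (s ∆ {a}) ≤ f s + 1) {s t : Finset α} {k : ℕ}
    (hs : f s ≤ k) (ht : k ≤ f t) : ∃ u, f u = k := by
  induction h : s ∆ t using Finset.induction_on generalizing s with
  | empty => exact ⟨s, le_antisymm hs (symmDiff_eq_bot.1 h ▸ ht)⟩
  | insert a d ha ih =>
    by_cases hk : f (s ∆ {a}) ≤ k
    · refine ih hk ?_
      rw [symmDiff_right_comm, h, Finset.insert_eq, ← Finset.sup_eq_union,
        (Finset.disjoint_singleton_left.2 ha).symmDiff_eq_sup.symm, symmDiff_symmDiff_self']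
    · exact ⟨s, by have := hf s a; omega⟩

theorem Matrix.rank_add_le_s16 {m n R : Type*} [Fintype n] [Field R] (A B : Matrix m n R) :
    (A + B).rank ≤ A.rank + B.rank := by
  unfold Matrix.rank
  rw [Matrix.mulVecLin_add]
  refine (Submodule.finrank_mono ?_).trans (Submodule.finrank_add_le_finrank_add_finrank _ _)
  rintro x ⟨y, rfl⟩
  exact Submodule.mem_sup.2 ⟨A.mulVecLin y, ⟨y, rfl⟩, B.mulVecLin y, ⟨y, rfl⟩, rfl⟩

section indDiag

variable {V F : Type*} [Fintype V] [DecidableEq V] [Field F]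

theorem support_row_indDiag_symmDiff_singleton_sub_subset (A : Finset V) (a : V) :
    Function.support (indDiag (A ∆ {a}) - indDiag A : Matrix V V F).row ⊆ ({a} : Finset V) := by
  intro i hi
  by_contra hia
  refine hi (funext fun j => ?_)
  simp_all [indDiag, Finset.mem_symmDiff]

theorem rank_add_indDiag_symmDiff_singleton_le (M : Matrix V V F) (A : Finset V) (a : V) :
    (M + indDiag (A ∆ {a})).rank ≤ (M + indDiag A).rank + 1 :=
  calc (M + indDiag (A ∆ {a})).rank
      = (M + indDiag A + (indDiag (A ∆ {a}) - indDiag A)).rank := by rw [add_add_sub_cancel]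
    _ ≤ (M + indDiag A).rank + (indDiag (A ∆ {a}) - indDiag A : Matrix V V F).rank :=
      Matrix.rank_add_le_s16 _ _
    _ ≤ (M + indDiag A).rank + 1 := by
      grw [Matrix.rank_le_card_of_support_subset _ _
        (support_row_indDiag_symmDiff_singleton_sub_subset A a), Finset.card_singleton]

end indDiag

theorem partialTau_ranks_interval
    {V F : Type*} [Fintype V] [DecidableEq V] [Field F]
    (M : Matrix V V F) (k : ℕ)
    (h₀ : ∃ A : Finset V, (M + indDiag A).rank ≤ k)
    (h₁ : ∃ A : Finset V, k ≤ (M + indDiag A).rank) :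
    ∃ A : Finset V, (M + indDiag A).rank = k := by
  obtain ⟨A, hA⟩ := h₀
  obtain ⟨B, hB⟩ := h₁
  exact Finset.intermediate_value_of_symmDiff_singleton_le (fun A => (M + indDiag A).rank)
    (rank_add_indDiag_symmDiff_singleton_le M) hA hB
end

section
/- Let n be an even positive integer and let M be the adjacency matrix of the complete graph K_n over GF(2) (all off-diagonal entries 1, diagonal 0). Then the partial-⟨τδτ⟩ polynomial P_{τδτ}(M,z) = Σ_{A ⊆ {1,…,n}} z^{rank(M) − corank((M+I_A)[A])} equals z(1+z)^n + z^n − z^{n+1}. -/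
open Matrix Polynomial

/-! With `J = of 1` the all-ones matrix, `M = J - 1`. Over `GF(2)` and for even `n` we have
`J * J = n • J = 0` and `J + J = 0`, so `M * M = 1` and `M` has full rank `n`. For every `A`
the principal submatrix of `M + I_A` on `A` is the all-ones matrix, whose corank is `|A| - 1`
in truncated subtraction (also for `A = ∅`). Hence the summand is `z ^ (n + 1 - |A|)` except at
`A = ∅`, where it is `z ^ n`, and `∑_A z ^ (n + 1 - |A|) = z * (1 + z) ^ n` by the binomial
theorem. -/

open Finset

theorem Fintype.sum_pow_card_sub_card_sub_one {ι R : Type*} [Fintype ι] [DecidableEq ι]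
    [CommRing R] (x : R) :
    ∑ A : Finset ι, x ^ (Fintype.card ι - (#A - 1)) =
      x * (1 + x) ^ Fintype.card ι + x ^ Fintype.card ι - x ^ (Fintype.card ι + 1) := by
  have hterm (A : Finset ι) : x ^ (Fintype.card ι - (#A - 1)) =
      x * x ^ (Fintype.card ι - #A) +
        if A = ∅ then x ^ Fintype.card ι - x ^ (Fintype.card ι + 1) else 0 := by
    obtain rfl | hA := A.eq_empty_or_nonempty
    · simp only [Finset.card_empty, Nat.zero_sub, if_true, tsub_zero]
      ring
    · have := hA.card_pos
      have := A.card_le_univ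
      rw [if_neg hA.ne_empty, add_zero, ← pow_succ']
      congr 1
      omega
  simp_rw [hterm, sum_add_distrib, Finset.sum_ite_eq', mem_univ, if_true, ← mul_sum,
    ← Fintype.sum_pow_mul_eq_add_pow ι 1 x, one_pow, one_mul]
  ring

namespace Matrix

variable {ι : Type*} [Fintype ι]

theorem rank_of_one {F : Type*} [Field F] [Nonempty ι] : (of 1 : Matrix ι ι F).rank = 1 := by
  rw [rank_eq_finrank_span_cols]
  have hcols : Set.range (of 1 : Matrix ι ι F).col = {1} := by
    ext v
    constructor
    · rintro ⟨j, rfl⟩; rfl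
    · rintro rfl; exact ⟨Classical.arbitrary ι, rfl⟩
  rw [hcols, finrank_span_singleton one_ne_zero]

theorem card_sub_rank_of_one {F : Type*} [Field F] :
    Fintype.card ι - (of 1 : Matrix ι ι F).rank = Fintype.card ι - 1 := by
  cases isEmpty_or_nonempty ι
  · simp
  · rw [rank_of_one]

theorem of_one_mul_of_one {R : Type*} [NonAssocSemiring R] :
    (of 1 : Matrix ι ι R) * of 1 = (Fintype.card ι : R) • of 1 := by
  ext i j
  simp [mul_apply]

theorem of_one_sub_one_mul_self {R : Type*} [CommRing R] [CharP R 2] [DecidableEq ι]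
    (hι : Even (Fintype.card ι)) : (of 1 - 1 : Matrix ι ι R) * (of 1 - 1) = 1 := by
  have hsq : (of 1 : Matrix ι ι R) * of 1 = 0 := by
    rw [of_one_mul_of_one, (CharP.cast_eq_zero_iff R 2 _).2 hι.two_dvd, zero_smul]
  have hdouble : (of 1 : Matrix ι ι R) + of 1 = 0 := by
    ext
    simp [CharTwo.add_self_eq_zero]
  calc (of 1 - 1 : Matrix ι ι R) * (of 1 - 1) = of 1 * of 1 - (of 1 + of 1) + 1 := by
        noncomm_ring
    _ = 1 := by rw [hsq, hdouble, sub_zero, zero_add]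

theorem rank_of_one_sub_one {F : Type*} [Field F] [CharP F 2] [DecidableEq ι]
    (hι : Even (Fintype.card ι)) : (of 1 - 1 : Matrix ι ι F).rank = Fintype.card ι :=
  rank_of_isUnit _ <| (isUnit_iff_isUnit_det _).2 <|
    isUnit_det_of_right_inverse (of_one_sub_one_mul_self hι)

end Matrix

theorem psub_of_one_sub_one_add_indDiag {V F : Type*} [Fintype V] [DecidableEq V] [Field F]
    (A : Finset V) : psub (of 1 - 1 + indDiag A : Matrix V V F) A = of 1 := by
  ext i j
  by_cases h : i = j
  · subst h
    simp [psub, indDiag]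
  · simp [psub, indDiag, Subtype.ext_iff.not.mp h]

theorem partialTauDeltaTau_completeGraph_even_general
    (n : ℕ) (heven : Even n)
    (M : Matrix (Fin n) (Fin n) (ZMod 2))
    (hM : ∀ i j, M i j = if i = j then 0 else 1) :
    (∑ A : Finset (Fin n), (X : Polynomial ℤ) ^
        (M.rank - (A.card - (psub (M + indDiag A) A).rank))) =
      X * (1 + X) ^ n + X ^ n - X ^ (n + 1) := by
  obtain rfl : M = of 1 - 1 := by
    ext i j
    simp [hM, one_apply, sub_ite]
  have hcorank (A : Finset (Fin n)) :
      A.card - (psub (of 1 - 1 + indDiag A : Matrix (Fin n) (Fin n) (ZMod 2)) A).rank =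
        A.card - 1 := by
    rw [psub_of_one_sub_one_add_indDiag, ← Fintype.card_coe A, card_sub_rank_of_one]
  simp_rw [hcorank, rank_of_one_sub_one ((Fintype.card_fin n).symm ▸ heven),
    Fintype.card_fin]
  simpa only [Fintype.card_fin] using Fintype.sum_pow_card_sub_card_sub_one (ι := Fin n) (X : ℤ[X])

theorem partialTauDeltaTau_completeGraph_even
    (n : ℕ) (hn : 0 < n) (heven : Even n)
    (M : Matrix (Fin n) (Fin n) (ZMod 2))
    (hM : ∀ i j, M i j = if i = j then 0 else 1) :
    (∑ A : Finset (Fin n), (X : Polynomial ℤ) ^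
        (M.rank - (A.card - (psub (M + indDiag A) A).rank))) =
      X * (1 + X) ^ n + X ^ n - X ^ (n + 1) :=
  partialTauDeltaTau_completeGraph_even_general n heven M hM
end
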